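/- The grounded extension of a finite argumentation framework equals the union of the in-sets of all strongly admissible labellings, and this union is itself the in-set of a strongly admissible labelling (the grounded labelling). -/

import Mathlib

inductive Label where
  | inn | out | und
deriving DecidableEq

/-- A labelling is admissible if every in-labelled argument has all its attackers
labelled out, and every out-labelled argument has at least one in-labelled attacker. -/
def Admissible {Ar : Type*} (att : Ar → Ar → Prop) (L : Ar → Label) : Prop :=
  (∀ x, L x = Label.inn → ∀ y, att y x → L y = Label.out) ∧
  (∀ x, L x = Label.out → ∃ y, att y x ∧ L y = Label.inn)

/-- A min-max numbering (with only natural-number values): in-arguments are numbered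
1 + max of the numbers of their out-labelled attackers (max ∅ = 0), and out-arguments
1 + min of the numbers of their in-labelled attackers. -/
def IsMinMax {Ar : Type*} (att : Ar → Ar → Prop) (L : Ar → Label) (MM : Ar → ℕ) : Prop :=
  (∀ x, L x = Label.inn → MM x = sSup (MM '' {y | att y x ∧ L y = Label.out}) + 1) ∧
  (∀ x, L x = Label.out → MM x = sInf (MM '' {y | att y x ∧ L y = Label.inn}) + 1)

/-- Strongly admissible: admissible and admitting a min-max numbering with only
natural-number (finite) values. -/
def StronglyAdmissible {Ar : Type*} (att : Ar → Ar → Prop) (L : Ar → Label) : Prop :=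
  Admissible att L ∧ ∃ MM : Ar → ℕ, IsMinMax att L MM

/-- Complete labelling: admissible, and every undec argument has an undec attacker
and no in-labelled attacker. -/
def CompleteLab {Ar : Type*} (att : Ar → Ar → Prop) (L : Ar → Label) : Prop :=
  Admissible att L ∧
  ∀ x, L x = Label.und →
    (∃ y, att y x ∧ L y = Label.und) ∧ ∀ y, att y x → L y ≠ Label.inn

/-- The order on labellings: Lab1 ⊑ Lab2 iff in(Lab1) ⊆ in(Lab2) and out(Lab1) ⊆ out(Lab2). -/
def LabLe {Ar : Type*} (L1 L2 : Ar → Label) : Prop :=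
  (∀ x, L1 x = Label.inn → L2 x = Label.inn) ∧
  (∀ x, L1 x = Label.out → L2 x = Label.out)

/-!
A strongly admissible labelling lies below every complete labelling, by induction on its min-max
numbering. Conversely, the labelling built from the least fixpoint of the characteristic function
`S ↦ {x | every attacker of x is attacked by S}` (reached from `∅` in finitely many steps) is
complete and strongly admissible, so it is the grounded labelling, and its in-set contains that
of every strongly admissible labelling. Its min-max numbering gives `2n + 1` to an argument first
entering at stage `n + 1` and `2n + 2` to one first attacked by stage `n + 1`: an argument first
entering at stage `n + 1` has all its attackers attacked by stage `n`, and one of them not earlier.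
-/

section Labelling

variable {Ar : Type*} {att : Ar → Ar → Prop}

theorem labLe_antisymm {L₁ L₂ : Ar → Label} (h₁₂ : LabLe L₁ L₂) (h₂₁ : LabLe L₂ L₁) :
    L₁ = L₂ := by
  funext x
  cases h₁ : L₁ x <;> cases h₂ : L₂ x <;> simp_all [h₁₂.1 x, h₁₂.2 x, h₂₁.1 x, h₂₁.2 x]

theorem CompleteLab.eq_inn_of_forall_attacker_out {C : Ar → Label} (hC : CompleteLab att C)
    {x : Ar} (h : ∀ y, att y x → C y = .out) : C x = .inn := by
  cases hx : C x with
  | inn => rfl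
  | out =>
    obtain ⟨y, hyx, hy⟩ := hC.1.2 x hx
    simp [h y hyx] at hy
  | und =>
    obtain ⟨y, hyx, hy⟩ := (hC.2 x hx).1
    simp [h y hyx] at hy

theorem CompleteLab.eq_out_of_attacker_inn {C : Ar → Label} (hC : CompleteLab att C)
    {x y : Ar} (hyx : att y x) (hy : C y = .inn) : C x = .out := by
  cases hx : C x with
  | inn => simp [hC.1.1 x hx y hyx] at hy
  | out => rfl
  | und => exact absurd hy ((hC.2 x hx).2 y hyx)

theorem StronglyAdmissible.labLe [Finite Ar] {L C : Ar → Label}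
    (hL : StronglyAdmissible att L) (hC : CompleteLab att C) : LabLe L C := by
  obtain ⟨⟨hinn, hout⟩, MM, hMMinn, hMMout⟩ := hL
  suffices h : ∀ x, (L x = .inn → C x = .inn) ∧ (L x = .out → C x = .out) from
    ⟨fun x => (h x).1, fun x => (h x).2⟩
  intro x
  induction x using (measure MM).wf.induction with
  | h x ih =>
    refine ⟨fun hx => ?_, fun hx => ?_⟩
    · refine hC.eq_inn_of_forall_attacker_out fun y hyx => ?_
      have hy : L y = .out := hinn x hx y hyx
      have hlt : MM y < MM x := by
        have := le_csSup (Set.toFinite (MM '' {y | att y x ∧ L y = .out})).bddAbove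
          (Set.mem_image_of_mem MM ⟨hyx, hy⟩)
        rw [hMMinn x hx]
        omega
      exact (ih y hlt).2 hy
    · obtain ⟨y₀, hy₀x, hy₀⟩ := hout x hx
      obtain ⟨y, ⟨hyx, hy⟩, hMMy⟩ := Nat.sInf_mem (s := MM '' {y | att y x ∧ L y = .inn})
        ⟨MM y₀, y₀, ⟨hy₀x, hy₀⟩, rfl⟩
      have hlt : MM y < MM x := by
        rw [hMMout x hx, ← hMMy]
        omega
      exact hC.eq_out_of_attacker_inn hyx ((ih y hlt).1 hy)

end Labelling

section Grounded

variable {Ar : Type*} (att : Ar → Ar → Prop)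

def defended (S : Set Ar) : Set Ar := {x | ∀ y, att y x → ∃ z ∈ S, att z y}

theorem defended_mono : Monotone (defended att) := by
  intro S T hST x hx y hyx
  obtain ⟨z, hz, hzy⟩ := hx y hyx
  exact ⟨z, hST hz, hzy⟩

def groundedStage (n : ℕ) : Set Ar := (defended att)^[n] ∅

theorem groundedStage_succ (n : ℕ) :
    groundedStage att (n + 1) = defended att (groundedStage att n) :=
  Function.iterate_succ_apply' _ _ _

theorem groundedStage_mono : Monotone (groundedStage att) :=
  (defended_mono att).monotone_iterate_of_le_map (Set.empty_subset _)

def groundedIn : Set Ar := ⋃ n, groundedStage att n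

theorem defended_groundedIn_subset [Finite Ar] :
    defended att (groundedIn att) ⊆ groundedIn att := by
  obtain ⟨N, hN⟩ := WellFoundedGT.monotone_chain_condition ⟨_, groundedStage_mono att⟩
  have hstable : groundedIn att ⊆ groundedStage att N := Set.iUnion_subset fun n =>
    (groundedStage_mono att (le_max_left n N)).trans (hN _ (le_max_right n N)).ge
  calc defended att (groundedIn att) ⊆ defended att (groundedStage att N) :=
        defended_mono att hstable
    _ = groundedStage att (N + 1) := (groundedStage_succ att N).symm
    _ ⊆ groundedIn att := Set.subset_iUnion _ _

variable {att}

theorem not_attacks_of_mem_groundedStage {n : ℕ} {z x : Ar} (hz : z ∈ groundedStage att n)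
    (hx : x ∈ groundedStage att n) : ¬ att z x := by
  induction n generalizing z x with
  | zero => exact absurd hz (Set.notMem_empty z)
  | succ n ih =>
    intro hzx
    rw [groundedStage_succ] at hz hx
    obtain ⟨w, hw, hwz⟩ := hx z hzx
    obtain ⟨v, hv, hvw⟩ := hz w hwz
    exact ih hv hw hvw

theorem not_attacks_of_mem_groundedIn {z x : Ar} (hz : z ∈ groundedIn att)
    (hx : x ∈ groundedIn att) : ¬ att z x := by
  obtain ⟨m, hm⟩ := Set.mem_iUnion.1 hz
  obtain ⟨n, hn⟩ := Set.mem_iUnion.1 hx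
  exact not_attacks_of_mem_groundedStage (groundedStage_mono att (le_max_left m n) hm)
    (groundedStage_mono att (le_max_right m n) hn)

variable (att) in
open Classical in
noncomputable def groundedLab (x : Ar) : Label :=
  if x ∈ groundedIn att then .inn else if ∃ z ∈ groundedIn att, att z x then .out else .und

theorem groundedLab_eq_inn {x : Ar} : groundedLab att x = .inn ↔ x ∈ groundedIn att := by
  unfold groundedLab
  split_ifs <;> simp_all

theorem groundedLab_eq_out {x : Ar} :
    groundedLab att x = .out ↔ ∃ z ∈ groundedIn att, att z x := by
  unfold groundedLab
  split_ifs with hx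
  · simp only [false_iff, not_exists, not_and]
    exact fun z hz => not_attacks_of_mem_groundedIn hz hx
  · simp_all
  · simp_all

theorem groundedLab_eq_und {x : Ar} :
    groundedLab att x = .und ↔ x ∉ groundedIn att ∧ ∀ z ∈ groundedIn att, ¬ att z x := by
  unfold groundedLab
  split_ifs <;> simp_all

variable (att) in
theorem admissible_groundedLab : Admissible att (groundedLab att) := by
  refine ⟨fun x hx y hyx => ?_, fun x hx => ?_⟩
  · obtain ⟨n, hn⟩ := Set.mem_iUnion.1 (groundedLab_eq_inn.1 hx)
    have hxD : x ∈ defended att (groundedStage att n) := by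
      rw [← groundedStage_succ]
      exact groundedStage_mono att n.le_succ hn
    obtain ⟨z, hz, hzy⟩ := hxD y hyx
    exact groundedLab_eq_out.2 ⟨z, Set.mem_iUnion.2 ⟨n, hz⟩, hzy⟩
  · obtain ⟨z, hz, hzx⟩ := groundedLab_eq_out.1 hx
    exact ⟨z, hzx, groundedLab_eq_inn.2 hz⟩

variable (att) in
theorem completeLab_groundedLab [Finite Ar] : CompleteLab att (groundedLab att) := by
  refine ⟨admissible_groundedLab att, fun x hx => ⟨?_, fun y hyx hy => ?_⟩⟩
  · obtain ⟨hxG, hxA⟩ := groundedLab_eq_und.1 hx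
    have hxD : x ∉ defended att (groundedIn att) := fun h => hxG (defended_groundedIn_subset att h)
    simp only [defended, Set.mem_ofPred_eq, not_forall, not_exists, not_and] at hxD
    obtain ⟨y, hyx, hy⟩ := hxD
    exact ⟨y, hyx, groundedLab_eq_und.2 ⟨fun hyG => hxA y hyG hyx, hy⟩⟩
  · exact (groundedLab_eq_und.1 hx).2 y (groundedLab_eq_inn.1 hy) hyx

variable (att) in
noncomputable def inRank (x : Ar) : ℕ := sInf {n | x ∈ groundedStage att (n + 1)}

variable (att) in
noncomputable def outRank (x : Ar) : ℕ := sInf {n | ∃ z ∈ groundedStage att (n + 1), att z x}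

theorem inRank_le {x : Ar} {n : ℕ} (hx : x ∈ groundedStage att (n + 1)) : inRank att x ≤ n :=
  Nat.sInf_le hx

theorem outRank_le {x z : Ar} {n : ℕ} (hz : z ∈ groundedStage att (n + 1)) (hzx : att z x) :
    outRank att x ≤ n :=
  Nat.sInf_le ⟨z, hz, hzx⟩

theorem mem_groundedStage_inRank {x : Ar} (hx : x ∈ groundedIn att) :
    x ∈ groundedStage att (inRank att x + 1) := by
  obtain ⟨n, hn⟩ := Set.mem_iUnion.1 hx
  cases n with
  | zero => exact absurd hn (Set.notMem_empty x)
  | succ n => exact Nat.sInf_mem (s := {n | x ∈ groundedStage att (n + 1)}) ⟨n, hn⟩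

theorem exists_mem_groundedStage_outRank {x : Ar} (hx : ∃ z ∈ groundedIn att, att z x) :
    ∃ z ∈ groundedStage att (outRank att x + 1), att z x := by
  obtain ⟨z, hz, hzx⟩ := hx
  exact Nat.sInf_mem (s := {n | ∃ z ∈ groundedStage att (n + 1), att z x})
    ⟨inRank att z, z, mem_groundedStage_inRank hz, hzx⟩

theorem outRank_lt_inRank {x y : Ar} (hx : x ∈ groundedIn att) (hyx : att y x) :
    outRank att y < inRank att x := by
  have hxD := mem_groundedStage_inRank hx
  cases h : inRank att x with
  | zero =>
    rw [h, groundedStage_succ] at hxD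
    obtain ⟨z, hz, -⟩ := hxD y hyx
    exact absurd hz (Set.notMem_empty z)
  | succ m =>
    rw [h, groundedStage_succ] at hxD
    obtain ⟨z, hz, hzy⟩ := hxD y hyx
    have := outRank_le hz hzy
    omega

theorem outRank_le_inRank {x z : Ar} (hz : z ∈ groundedIn att) (hzx : att z x) :
    outRank att x ≤ inRank att z :=
  outRank_le (mem_groundedStage_inRank hz) hzx

theorem exists_attacker_outRank_add_one_eq {x : Ar} (hx : x ∈ groundedIn att)
    (h0 : inRank att x ≠ 0) : ∃ y, att y x ∧ outRank att y + 1 = inRank att x := by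
  obtain ⟨m, hm⟩ := Nat.exists_eq_succ_of_ne_zero h0
  have hxm : x ∉ defended att (groundedStage att m) := by
    rw [← groundedStage_succ]
    intro h
    have := inRank_le h
    omega
  simp only [defended, Set.mem_ofPred_eq, not_forall, not_exists, not_and] at hxm
  obtain ⟨y, hyx, hy⟩ := hxm
  have hlt := outRank_lt_inRank hx hyx
  have hyA : ∃ z ∈ groundedIn att, att z y := by
    have hxD := mem_groundedStage_inRank hx
    rw [groundedStage_succ] at hxD
    obtain ⟨z, hz, hzy⟩ := hxD y hyx
    exact ⟨z, Set.mem_iUnion.2 ⟨_, hz⟩, hzy⟩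
  obtain ⟨z, hz, hzy⟩ := exists_mem_groundedStage_outRank hyA
  have hge : m < outRank att y + 1 := by
    by_contra! hle
    exact hy z (groundedStage_mono att hle hz) hzy
  exact ⟨y, hyx, by omega⟩

theorem exists_attacker_inRank_eq {x : Ar} (hx : ∃ z ∈ groundedIn att, att z x) :
    ∃ z ∈ groundedIn att, att z x ∧ inRank att z = outRank att x := by
  obtain ⟨z, hz, hzx⟩ := exists_mem_groundedStage_outRank hx
  have hzG : z ∈ groundedIn att := Set.mem_iUnion.2 ⟨_, hz⟩
  exact ⟨z, hzG, hzx, le_antisymm (inRank_le hz) (outRank_le_inRank hzG hzx)⟩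

variable (att) in
open Classical in
noncomputable def groundedNumbering (x : Ar) : ℕ :=
  if x ∈ groundedIn att then 2 * inRank att x + 1 else 2 * outRank att x + 2

theorem groundedNumbering_of_mem {x : Ar} (hx : x ∈ groundedIn att) :
    groundedNumbering att x = 2 * inRank att x + 1 := by
  simp [groundedNumbering, hx]

theorem groundedNumbering_of_notMem {x : Ar} (hx : x ∉ groundedIn att) :
    groundedNumbering att x = 2 * outRank att x + 2 := by
  simp [groundedNumbering, hx]

theorem groundedNumbering_of_groundedLab_eq_inn {x : Ar} (hx : groundedLab att x = .inn) :
    groundedNumbering att x =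
      sSup (groundedNumbering att '' {y | att y x ∧ groundedLab att y = .out}) + 1 := by
  have hxG := groundedLab_eq_inn.1 hx
  have hbound : ∀ b ∈ groundedNumbering att '' {y | att y x ∧ groundedLab att y = .out},
      b ≤ 2 * inRank att x := by
    rintro _ ⟨y, ⟨hyx, -⟩, rfl⟩
    rw [groundedNumbering_of_notMem fun hy => not_attacks_of_mem_groundedIn hy hxG hyx]
    have := outRank_lt_inRank hxG hyx
    omega
  rw [groundedNumbering_of_mem hxG, add_left_inj]
  refine (le_antisymm (csSup_le' hbound) ?_).symm
  rcases eq_or_ne (inRank att x) 0 with h0 | h0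
  · simp [h0]
  · obtain ⟨y, hyx, hy⟩ := exists_attacker_outRank_add_one_eq hxG h0
    have hyG : y ∉ groundedIn att := fun hyG => not_attacks_of_mem_groundedIn hyG hxG hyx
    refine le_csSup ⟨_, hbound⟩ ⟨y, ⟨hyx, (admissible_groundedLab att).1 x hx y hyx⟩, ?_⟩
    rw [groundedNumbering_of_notMem hyG]
    omega

theorem groundedNumbering_of_groundedLab_eq_out {x : Ar} (hx : groundedLab att x = .out) :
    groundedNumbering att x =
      sInf (groundedNumbering att '' {y | att y x ∧ groundedLab att y = .inn}) + 1 := by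
  have hxA := groundedLab_eq_out.1 hx
  have hxG : x ∉ groundedIn att := fun hxG => by
    obtain ⟨z, hz, hzx⟩ := hxA
    exact not_attacks_of_mem_groundedIn hz hxG hzx
  obtain ⟨z, hz, hzx, hrank⟩ := exists_attacker_inRank_eq hxA
  have hleast : IsLeast (groundedNumbering att '' {y | att y x ∧ groundedLab att y = .inn})
      (2 * outRank att x + 1) := by
    refine ⟨⟨z, ⟨hzx, groundedLab_eq_inn.2 hz⟩, by rw [groundedNumbering_of_mem hz, hrank]⟩, ?_⟩
    rintro _ ⟨y, ⟨hyx, hy⟩, rfl⟩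
    rw [groundedLab_eq_inn] at hy
    rw [groundedNumbering_of_mem hy]
    have := outRank_le_inRank hy hyx
    omega
  rw [groundedNumbering_of_notMem hxG, hleast.csInf_eq]

variable (att) in
theorem isMinMax_groundedNumbering : IsMinMax att (groundedLab att) (groundedNumbering att) :=
  ⟨fun _ => groundedNumbering_of_groundedLab_eq_inn,
    fun _ => groundedNumbering_of_groundedLab_eq_out⟩

variable (att) in
theorem stronglyAdmissible_groundedLab : StronglyAdmissible att (groundedLab att) :=
  ⟨admissible_groundedLab att, _, isMinMax_groundedNumbering att⟩

end Grounded

/-- The grounded extension equals the union of in-sets of all strongly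
admissible labellings, and this union is itself the in-set of a strongly admissible
labelling. -/
theorem grounded_eq_union_stronglyAdmissible
    {Ar : Type*} [Fintype Ar] (att : Ar → Ar → Prop) (Lgr : Ar → Label)
    (hgr : CompleteLab att Lgr ∧ ∀ L, CompleteLab att L → LabLe Lgr L) :
    ({x | Lgr x = Label.inn} =
      {x | ∃ L : Ar → Label, StronglyAdmissible att L ∧ L x = Label.inn}) ∧
    (∃ L : Ar → Label, StronglyAdmissible att L ∧
      {x | L x = Label.inn} =
        {x | ∃ L' : Ar → Label, StronglyAdmissible att L' ∧ L' x = Label.inn}) := by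
  obtain ⟨hcomplete, hleast⟩ := hgr
  have hgrounded : Lgr = groundedLab att := labLe_antisymm (hleast _ (completeLab_groundedLab att))
    ((stronglyAdmissible_groundedLab att).labLe hcomplete)
  have hSA : StronglyAdmissible att Lgr := hgrounded ▸ stronglyAdmissible_groundedLab att
  have hunion : {x | Lgr x = Label.inn} =
      {x | ∃ L : Ar → Label, StronglyAdmissible att L ∧ L x = Label.inn} :=
    Set.ext fun x => ⟨fun hx => ⟨Lgr, hSA, hx⟩, fun ⟨L, hL, hx⟩ => (hL.labLe hcomplete).1 x hx⟩
  exact ⟨hunion, Lgr, hSA, hunion⟩
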